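/- Fix a signal h* ∈ ℝ^S with h*_i = 0 for all i ∈ Λ and support S := supp(h*), and a noise vector n ∈ ℝ^M with ‖n‖₁ ≤ σ. Assume the thresholds satisfy θ^l ≥ μ2·‖h^l − h*‖₁ + C_P·σ for every l ≥ 0 (so the iterates vanish off S). Then for every l ≥ 0, ‖h^{l+1} − h*‖₁ ≤ μ1·(|S|−1)·‖h^l − h*‖₁ + θ^l·|S| + |S|·C_P·σ, where |S| denotes the number of elements of S. -/

import Mathlib

open Finset

noncomputable def softThresh (θ x : ℝ) : ℝ := Real.sign x * max (|x| - θ) 0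

noncomputable def listaAge {M S : ℕ} (P : Matrix (Fin M) (Fin S) ℝ)
    (Λ : Finset (Fin S)) (θ : ℕ → ℝ) (y : Fin M → ℝ) : ℕ → Fin S → ℝ
  | 0 => fun _ => 0
  | l + 1 => fun i =>
      if i ∈ Λ then 0
      else softThresh (θ l)
        (listaAge P Λ θ y l i -
          ∑ m, P m i * ((∑ j, P m j * listaAge P Λ θ y l j) - y m))

noncomputable def l1norm {k : ℕ} (v : Fin k → ℝ) : ℝ := ∑ i, |v i|

noncomputable def l2norm {k : ℕ} (v : Fin k → ℝ) : ℝ := Real.sqrt (∑ i, (v i) ^ 2)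

noncomputable def supp {k : ℕ} (v : Fin k → ℝ) : Finset (Fin k) :=
  Finset.univ.filter (fun i => v i ≠ 0)

lemma softThresh_of_small {θ x : ℝ} (h : |x| ≤ θ) : softThresh θ x = 0 := by
  unfold softThresh
  rw [max_eq_right (by linarith), mul_zero]

lemma abs_softThresh_sub {θ : ℝ} (hθ : 0 ≤ θ) (b w : ℝ) :
    |softThresh θ (b + w) - b| ≤ |w| + θ := by
  by_cases h : |b + w| ≤ θ
  · rw [softThresh_of_small h, zero_sub, abs_neg]
    have h2 : |b| ≤ |b + w| + |w| := by
      calc |b| = |(b + w) + (-w)| := by ring_nf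
        _ ≤ |b + w| + |-w| := abs_add_le _ _
        _ = |b + w| + |w| := by rw [abs_neg]
    linarith
  · push_neg at h
    unfold softThresh
    rw [max_eq_left (by linarith)]
    have hsma : Real.sign (b + w) * |b + w| = b + w := by
      rcases lt_trichotomy (b + w) 0 with hc | hc | hc
      · rw [Real.sign_of_neg hc, abs_of_neg hc]; ring
      · rw [hc]; simp
      · rw [Real.sign_of_pos hc, abs_of_pos hc]; ring
    have hrw : Real.sign (b + w) * (|b + w| - θ) = (b + w) - Real.sign (b + w) * θ := by
      rw [mul_sub, hsma]
    rw [hrw]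
    have hs : |Real.sign (b + w)| ≤ 1 := by
      rcases Real.sign_apply_eq (b + w) with h1 | h1 | h1 <;> simp [h1]
    have h1 : |Real.sign (b + w) * θ| ≤ θ := by
      rw [abs_mul, abs_of_nonneg hθ]
      nlinarith
    calc |(b + w) - Real.sign (b + w) * θ - b| = |w + (-(Real.sign (b+w) * θ))| := by ring_nf
      _ ≤ |w| + |-(Real.sign (b+w) * θ)| := abs_add_le _ _
      _ ≤ |w| + θ := by rw [abs_neg]; linarith

/-- Lemma 2: per-layer ℓ1-error recursion for LISTA-AGE. -/
theorem lista_age_l1_recursion {M S : ℕ} (P : Matrix (Fin M) (Fin S) ℝ)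
    (hcol : ∀ i, ∑ m, P m i * P m i = 1)
    (Λ : Finset (Fin S)) (CP μ1 μ2 σ : ℝ) (hσ : 0 ≤ σ)
    (hCP : ∀ i j, |P i j| ≤ CP)
    (hμ1 : ∀ i j, i ≠ j → |∑ m, P m i * P m j| ≤ μ1)
    (hμ2 : ∀ i j, i ≠ j → i ∉ Λ → |∑ m, P m i * P m j| ≤ μ2)
    (hstar : Fin S → ℝ) (n : Fin M → ℝ)
    (hΛ : ∀ i ∈ Λ, hstar i = 0)
    (hn : l1norm n ≤ σ)
    (θ : ℕ → ℝ) (hθ0 : ∀ l, 0 ≤ θ l)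
    (hθ : ∀ l, μ2 * l1norm (fun i =>
        listaAge P Λ θ (fun m => (∑ j, P m j * hstar j) + n m) l i - hstar i)
        + CP * σ ≤ θ l) :
    ∀ l : ℕ,
      l1norm (fun i =>
          listaAge P Λ θ (fun m => (∑ j, P m j * hstar j) + n m) (l + 1) i - hstar i)
        ≤ μ1 * ((supp hstar).card - 1) *
            l1norm (fun i =>
              listaAge P Λ θ (fun m => (∑ j, P m j * hstar j) + n m) l i - hstar i)
          + θ l * (supp hstar).card + (supp hstar).card * CP * σ := by
  -- trivial case S = 0
  rcases Nat.eq_zero_or_pos S with hS0 | hS0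
  · subst hS0
    intro l
    simp [l1norm, supp, Finset.filter_eq_empty_iff]
  set y : Fin M → ℝ := fun m => (∑ j, P m j * hstar j) + n m with hy
  set A : ℕ → Fin S → ℝ := listaAge P Λ θ y with hA
  -- CP is nonnegative
  have hCP0 : 0 ≤ CP := by
    rcases Nat.eq_zero_or_pos M with hM0 | hM0
    · exfalso
      have := hcol ⟨0, hS0⟩
      subst hM0
      simpa using this
    · exact le_trans (abs_nonneg _) (hCP ⟨0, hM0⟩ ⟨0, hS0⟩)
  -- noise projection bound
  have hpin : ∀ i, |∑ m, P m i * n m| ≤ CP * σ := by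
    intro i
    calc |∑ m, P m i * n m| ≤ ∑ m, |P m i * n m| := Finset.abs_sum_le_sum_abs _ _
      _ ≤ ∑ m, CP * |n m| := by
          refine Finset.sum_le_sum fun m _ => ?_
          rw [abs_mul]
          exact mul_le_mul_of_nonneg_right (hCP m i) (abs_nonneg _)
      _ = CP * l1norm n := by rw [l1norm, Finset.mul_sum]
      _ ≤ CP * σ := mul_le_mul_of_nonneg_left hn hCP0
  -- unfolding of one iteration step off Λ
  have hstep : ∀ l i, i ∉ Λ → A (l+1) i
      = softThresh (θ l) (A l i - ∑ m, P m i * ((∑ j, P m j * A l j) - y m)) := by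
    intro l i hiΛ
    rw [hA]
    simp only [listaAge, if_neg hiΛ]
  have hstepΛ : ∀ l i, i ∈ Λ → A (l+1) i = 0 := by
    intro l i hiΛ
    rw [hA]
    simp only [listaAge, if_pos hiΛ]
  -- key algebraic identity for the soft-threshold argument
  have harg : ∀ l i, A l i - ∑ m, P m i * ((∑ j, P m j * A l j) - y m)
      = hstar i + ((∑ m, P m i * n m)
          - ∑ j ∈ Finset.univ.erase i, (∑ m, P m i * P m j) * (A l j - hstar j)) := by
    intro l i
    have h2 : ∀ m, P m i * ((∑ j, P m j * A l j) - y m)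
        = (∑ j, P m i * P m j * (A l j - hstar j)) - P m i * n m := by
      intro m
      have h3 : ∑ j, P m i * P m j * (A l j - hstar j)
          = P m i * ((∑ j, P m j * A l j) - ∑ j, P m j * hstar j) := by
        rw [mul_sub, Finset.mul_sum, Finset.mul_sum, ← Finset.sum_sub_distrib]
        exact Finset.sum_congr rfl fun j _ => by ring
      rw [h3]
      simp only [hy]
      ring
    have h1 : ∑ m, P m i * ((∑ j, P m j * A l j) - y m)
        = (∑ j, (∑ m, P m i * P m j) * (A l j - hstar j)) - ∑ m, P m i * n m := by
      rw [Finset.sum_congr rfl fun m _ => h2 m, Finset.sum_sub_distrib]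
      congr 1
      rw [Finset.sum_comm]
      exact Finset.sum_congr rfl fun j _ => by rw [Finset.sum_mul]
    rw [h1]
    have h4 : ∑ j, (∑ m, P m i * P m j) * (A l j - hstar j)
        = (A l i - hstar i)
          + ∑ j ∈ Finset.univ.erase i, (∑ m, P m i * P m j) * (A l j - hstar j) := by
      rw [← Finset.add_sum_erase _ _ (Finset.mem_univ i), hcol i, one_mul]
    rw [h4]
    ring
  -- the iterates vanish off the support
  have hzero : ∀ l i, hstar i = 0 → A l i = 0 := by
    intro l
    induction l with
    | zero => intro i _; rw [hA]; simp only [listaAge]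
    | succ l ih =>
      intro i hi
      by_cases hiΛ : i ∈ Λ
      · exact hstepΛ l i hiΛ
      · rw [hstep l i hiΛ]
        apply softThresh_of_small
        rw [harg l i, hi, zero_add]
        have hb : |(∑ m, P m i * n m)
            - ∑ j ∈ Finset.univ.erase i, (∑ m, P m i * P m j) * (A l j - hstar j)|
            ≤ CP * σ + ∑ j ∈ Finset.univ.erase i, μ2 * |A l j - hstar j| := by
          calc |(∑ m, P m i * n m) - ∑ j ∈ Finset.univ.erase i,
                  (∑ m, P m i * P m j) * (A l j - hstar j)|
              ≤ |∑ m, P m i * n m| + |∑ j ∈ Finset.univ.erase i,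
                  (∑ m, P m i * P m j) * (A l j - hstar j)| := abs_sub _ _
            _ ≤ CP * σ + ∑ j ∈ Finset.univ.erase i, μ2 * |A l j - hstar j| := by
                refine add_le_add (hpin i) ?_
                calc |∑ j ∈ Finset.univ.erase i, (∑ m, P m i * P m j) * (A l j - hstar j)|
                    ≤ ∑ j ∈ Finset.univ.erase i,
                        |(∑ m, P m i * P m j) * (A l j - hstar j)| :=
                      Finset.abs_sum_le_sum_abs _ _
                  _ ≤ ∑ j ∈ Finset.univ.erase i, μ2 * |A l j - hstar j| := by
                      refine Finset.sum_le_sum fun j hj => ?_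
                      rw [abs_mul]
                      exact mul_le_mul_of_nonneg_right
                        (hμ2 i j (Ne.symm (Finset.ne_of_mem_erase hj)) hiΛ) (abs_nonneg _)
        have herase : ∑ j ∈ Finset.univ.erase i, μ2 * |A l j - hstar j|
            = μ2 * l1norm (fun j => A l j - hstar j) := by
          rw [← Finset.mul_sum]
          congr 1
          rw [Finset.sum_erase_eq_sub (Finset.mem_univ i)]
          have : |A l i - hstar i| = 0 := by rw [ih i hi, hi]; simp
          rw [this, sub_zero]
          rfl
        rw [herase] at hb
        linarith [hb, hθ l]
  intro l
  have hsuppmem : ∀ i, i ∈ supp hstar ↔ hstar i ≠ 0 := by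
    intro i; simp [supp]
  have hT : ∀ l', ∑ i ∈ supp hstar, |A l' i - hstar i|
      = l1norm (fun i => A l' i - hstar i) := by
    intro l'
    rw [l1norm]
    refine Finset.sum_subset (Finset.subset_univ _) fun i _ hi => ?_
    have h0 : hstar i = 0 := by
      by_contra h; exact hi ((hsuppmem i).2 h)
    rw [hzero l' i h0, h0]; simp
  -- pointwise bound on the support
  have hpt : ∀ i ∈ supp hstar, |A (l+1) i - hstar i|
      ≤ θ l + CP * σ + μ1 * (∑ j ∈ (supp hstar).erase i, |A l j - hstar j|) := by
    intro i hi
    have hi0 : hstar i ≠ 0 := (hsuppmem i).1 hi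
    have hiΛ : i ∉ Λ := fun hmem => hi0 (hΛ i hmem)
    rw [hstep l i hiΛ, harg l i]
    have hb1 := abs_softThresh_sub (hθ0 l) (hstar i)
      ((∑ m, P m i * n m)
        - ∑ j ∈ Finset.univ.erase i, (∑ m, P m i * P m j) * (A l j - hstar j))
    refine le_trans hb1 ?_
    have hrestrict : ∑ j ∈ Finset.univ.erase i, |(∑ m, P m i * P m j) * (A l j - hstar j)|
        = ∑ j ∈ (supp hstar).erase i, |(∑ m, P m i * P m j) * (A l j - hstar j)| := by
      symm
      refine Finset.sum_subset (Finset.erase_subset_erase _ (Finset.subset_univ _)) ?_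
      intro j hj hj2
      have hjne : j ≠ i := Finset.ne_of_mem_erase hj
      have hjn : j ∉ supp hstar := fun hjs => hj2 (Finset.mem_erase.2 ⟨hjne, hjs⟩)
      have h0 : hstar j = 0 := by
        by_contra h; exact hjn ((hsuppmem j).2 h)
      rw [hzero l j h0, h0]
      simp
    have hw : |(∑ m, P m i * n m)
        - ∑ j ∈ Finset.univ.erase i, (∑ m, P m i * P m j) * (A l j - hstar j)|
        ≤ CP * σ + μ1 * (∑ j ∈ (supp hstar).erase i, |A l j - hstar j|) := by
      calc |(∑ m, P m i * n m)
          - ∑ j ∈ Finset.univ.erase i, (∑ m, P m i * P m j) * (A l j - hstar j)|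
          ≤ |∑ m, P m i * n m| + |∑ j ∈ Finset.univ.erase i,
              (∑ m, P m i * P m j) * (A l j - hstar j)| := abs_sub _ _
        _ ≤ CP * σ + ∑ j ∈ Finset.univ.erase i,
              |(∑ m, P m i * P m j) * (A l j - hstar j)| :=
            add_le_add (hpin i) (Finset.abs_sum_le_sum_abs _ _)
        _ = CP * σ + ∑ j ∈ (supp hstar).erase i,
              |(∑ m, P m i * P m j) * (A l j - hstar j)| := by rw [hrestrict]
        _ ≤ CP * σ + μ1 * (∑ j ∈ (supp hstar).erase i, |A l j - hstar j|) := by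
            rw [Finset.mul_sum]
            refine add_le_add le_rfl (Finset.sum_le_sum fun j hj => ?_)
            rw [abs_mul]
            exact mul_le_mul_of_nonneg_right
              (hμ1 i j (Ne.symm (Finset.ne_of_mem_erase hj))) (abs_nonneg _)
    linarith [hw]
  have hsum := Finset.sum_le_sum hpt
  have h5 : ∀ i ∈ supp hstar, ∑ j ∈ (supp hstar).erase i, |A l j - hstar j|
      = (∑ j ∈ supp hstar, |A l j - hstar j|) - |A l i - hstar i| := fun i hi =>
    Finset.sum_erase_eq_sub hi
  have hR : ∑ i ∈ supp hstar,
        (θ l + CP * σ + μ1 * ∑ j ∈ (supp hstar).erase i, |A l j - hstar j|)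
      = ((supp hstar).card : ℝ) * (θ l + CP * σ)
        + μ1 * (((supp hstar).card : ℝ) * (∑ j ∈ supp hstar, |A l j - hstar j|)
            - ∑ j ∈ supp hstar, |A l j - hstar j|) := by
    rw [Finset.sum_add_distrib, Finset.sum_const, nsmul_eq_mul, ← Finset.mul_sum]
    congr 1
    rw [Finset.sum_congr rfl h5, Finset.sum_sub_distrib, Finset.sum_const, nsmul_eq_mul]
  rw [hT (l+1), hR] at hsum
  rw [← hT l]
  have hring : ((supp hstar).card : ℝ) * (θ l + CP * σ)
      + μ1 * (((supp hstar).card : ℝ) * (∑ j ∈ supp hstar, |A l j - hstar j|)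
          - ∑ j ∈ supp hstar, |A l j - hstar j|)
      = μ1 * (((supp hstar).card : ℝ) - 1) * (∑ j ∈ supp hstar, |A l j - hstar j|)
        + θ l * ((supp hstar).card : ℝ) + ((supp hstar).card : ℝ) * CP * σ := by ring
  linarith [hsum, hring]
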